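/- arXiv:2110.14262 — 2 statements merged into one kernel-verified Lean document; each statement's English description precedes it below -/
import Mathlib

section
/- For every C¹ operator-valued field T : U → L(ℝ³,ℝ³) and every extension T^e of T, at each ξ ∈ U one has div_Γ T (ξ) = Σ_{i=1}^{3} tr( P(ξ) ∇̂(T^e ê_i)(R(ξ)) P(ξ) ) ê_i, where ê_1,ê_2,ê_3 is the standard basis of ℝ³; that is, the curvilinear surface divergence of T equals the row-wise Cartesian surface divergence of Tᵀ. -/
noncomputable section

open scoped BigOperators Matrix

abbrev V3 := Fin 3 → ℝ
abbrev V2 := Fin 2 → ℝ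

/-- Euclidean dot product on `ℝ³`. -/
def dot3 (a b : V3) : ℝ := ∑ i, a i * b i

/-- Euclidean norm on `ℝ³`. -/
def norm3 (a : V3) : ℝ := Real.sqrt (dot3 a a)

/-- Partial derivative `∂_α` of a field on (part of) `ℝ²`. -/
def pd2 {E : Type*} [NormedAddCommGroup E] [NormedSpace ℝ E]
    (f : V2 → E) (α : Fin 2) (ξ : V2) : E :=
  fderiv ℝ f ξ (Pi.single α 1)

/-- Partial derivative `∂_i` of a field on (part of) `ℝ³`. -/
def pd3 {E : Type*} [NormedAddCommGroup E] [NormedSpace ℝ E]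
    (f : V3 → E) (i : Fin 3) (q : V3) : E :=
  fderiv ℝ f q (Pi.single i 1)

/-- Covariant tangent basis `g_α = ∂_α R`. -/
def gcov (R : V2 → V3) (α : Fin 2) (ξ : V2) : V3 := pd2 R α ξ

/-- Metric tensor `g_{αβ}`. -/
def gmat (R : V2 → V3) (ξ : V2) : Matrix (Fin 2) (Fin 2) ℝ :=
  Matrix.of fun α β => dot3 (gcov R α ξ) (gcov R β ξ)

/-- Inverse metric `g^{αβ}`. -/
def ginv (R : V2 → V3) (ξ : V2) : Matrix (Fin 2) (Fin 2) ℝ := (gmat R ξ)⁻¹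

/-- Contravariant basis `g^α = g^{αβ} g_β`. -/
def gcon (R : V2 → V3) (α : Fin 2) (ξ : V2) : V3 :=
  ∑ β, ginv R ξ α β • gcov R β ξ

/-- Unit normal `n = (g₁ × g₂)/‖g₁ × g₂‖`. -/
def nrm (R : V2 → V3) (ξ : V2) : V3 :=
  (norm3 (crossProduct (gcov R 0 ξ) (gcov R 1 ξ)))⁻¹ •
    crossProduct (gcov R 0 ξ) (gcov R 1 ξ)

/-- Tangential projection `P = I - n nᵀ`. -/
def Pmat (R : V2 → V3) (ξ : V2) : Matrix (Fin 3) (Fin 3) ℝ :=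
  1 - Matrix.of fun i j => nrm R ξ i * nrm R ξ j

/-- Christoffel symbols `Γ^σ_{αβ} = g^σ · ∂_α g_β`. -/
def chris (R : V2 → V3) (σ α β : Fin 2) (ξ : V2) : ℝ :=
  dot3 (gcon R σ ξ) (pd2 (gcov R β) α ξ)

/-- Second fundamental form `b_{αβ} = n · ∂_α g_β`. -/
def bcov (R : V2 → V3) (α β : Fin 2) (ξ : V2) : ℝ :=
  dot3 (nrm R ξ) (pd2 (gcov R β) α ξ)

/-- Mixed components `b^β_α = g^{βσ} b_{σα}`. -/
def bmix (R : V2 → V3) (β α : Fin 2) (ξ : V2) : ℝ :=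
  ∑ σ, ginv R ξ β σ * bcov R σ α ξ

/-- Outer product `(a ⊗ b) w = (b·w) a` as a matrix. -/
def outer (a b : V3) : Matrix (Fin 3) (Fin 3) ℝ := Matrix.of fun i j => a i * b j

/-- Shape operator `B = b_{αβ} (g^α ⊗ g^β)`. -/
def shapeOp (R : V2 → V3) (ξ : V2) : Matrix (Fin 3) (Fin 3) ℝ :=
  ∑ α, ∑ β, bcov R α β ξ • outer (gcon R α ξ) (gcon R β ξ)

/-- Cartesian (Euclidean) gradient of a scalar field on `ℝ³`. -/
def grad3 (f : V3 → ℝ) (y : V3) : V3 := fun i => fderiv ℝ f y (Pi.single i 1)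

/-- Cartesian Jacobian `(∇̂ u)_{ij} = ∂_j u_i` of a vector field on `ℝ³`. -/
def jac3 (u : V3 → V3) (y : V3) : Matrix (Fin 3) (Fin 3) ℝ :=
  Matrix.of fun i j => fderiv ℝ u y (Pi.single j 1) i

/-- Surface gradient `∇_Γ φ = (∂_α φ) g^α` (curvilinear definition). -/
def gradGamma (R : V2 → V3) (φ : V2 → ℝ) (ξ : V2) : V3 :=
  ∑ α, pd2 φ α ξ • gcon R α ξ

/-- Covariant derivative `∇_Γ u = (P ∂_α u) ⊗ g^α` (curvilinear definition). -/
def covDer (R : V2 → V3) (u : V2 → V3) (ξ : V2) : Matrix (Fin 3) (Fin 3) ℝ :=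
  ∑ α, outer ((Pmat R ξ).mulVec (pd2 u α ξ)) (gcon R α ξ)

/-- Surface divergence `div_Γ u = ∂_α u · g^α` (curvilinear definition). -/
def divGamma (R : V2 → V3) (u : V2 → V3) (ξ : V2) : ℝ :=
  ∑ α, dot3 (pd2 u α ξ) (gcon R α ξ)

/-- Entrywise partial derivative `∂_γ T` of a matrix-valued field. -/
def pdMat (T : V2 → Matrix (Fin 3) (Fin 3) ℝ) (γ : Fin 2) (ξ : V2) :
    Matrix (Fin 3) (Fin 3) ℝ :=
  Matrix.of fun i j => pd2 (fun ξ' => T ξ' i j) γ ξ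

/-- Surface divergence `div_Γ T = (∂_α T)ᵀ g^α` of an operator-valued field. -/
def divGammaMat (R : V2 → V3) (T : V2 → Matrix (Fin 3) (Fin 3) ℝ) (ξ : V2) : V3 :=
  ∑ α, (pdMat T α ξ)ᵀ.mulVec (gcon R α ξ)

/-- Surface rate-of-strain tensor `E(u) = ½(∇_Γ u + (∇_Γ u)ᵀ)`. -/
def strain (R : V2 → V3) (u : V2 → V3) (ξ : V2) : Matrix (Fin 3) (Fin 3) ℝ :=
  (1/2 : ℝ) • (covDer R u ξ + (covDer R u ξ)ᵀ)

/-- The first two coordinates of a point of `ℝ³`. -/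
def emb2 (q : V3) : V2 := fun α => q α.castSucc

/-- Thin-film parametrization `R̃(ξ,ζ) = R(ξ) + ζ n(ξ)`. -/
def Rtilde (R : V2 → V3) (q : V3) : V3 := R (emb2 q) + q 2 • nrm R (emb2 q)

/-- Thin-film covariant basis `G_i = ∂_i R̃`. -/
def Gcov (R : V2 → V3) (i : Fin 3) (q : V3) : V3 := pd3 (Rtilde R) i q

/-- Thin-film metric `G_{ij} = G_i · G_j`. -/
def Gmat (R : V2 → V3) (q : V3) : Matrix (Fin 3) (Fin 3) ℝ :=
  Matrix.of fun i j => dot3 (Gcov R i q) (Gcov R j q)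

/-- Thin-film inverse metric `G^{ij}`. -/
def Ginv (R : V2 → V3) (q : V3) : Matrix (Fin 3) (Fin 3) ℝ := (Gmat R q)⁻¹

/-- Thin-film Christoffel symbols
`Γ̄^k_{ij} = ½ G^{kl}(∂_i G_{jl} + ∂_j G_{il} − ∂_l G_{ij})`. -/
def chrisT (R : V2 → V3) (k i j : Fin 3) (q : V3) : ℝ :=
  (1/2 : ℝ) * ∑ l, Ginv R q k l *
    (pd3 (fun q' => Gmat R q' j l) i q + pd3 (fun q' => Gmat R q' i l) j q
      - pd3 (fun q' => Gmat R q' i j) l q)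


/-! ### Auxiliary lemmas -/

lemma dot3_comm' (a b : V3) : dot3 a b = dot3 b a := by
  simp [dot3, mul_comm]

lemma dot3_cross_left' (a b : V3) : dot3 (crossProduct a b) a = 0 := by
  simp [dot3, cross_apply, Fin.sum_univ_three]; ring

lemma dot3_cross_right' (a b : V3) : dot3 (crossProduct a b) b = 0 := by
  simp [dot3, cross_apply, Fin.sum_univ_three]; ring

lemma dot3_cross_self' (a b : V3) :
    dot3 (crossProduct a b) (crossProduct a b)
      = dot3 a a * dot3 b b - dot3 a b * dot3 a b := by
  simp [dot3, cross_apply, Fin.sum_univ_three]; ring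

lemma dot3_self_pos' {a : V3} (ha : a ≠ 0) : 0 < dot3 a a := by
  obtain ⟨i, hi⟩ := Function.ne_iff.mp ha
  refine Finset.sum_pos' (fun j _ => mul_self_nonneg _) ⟨i, Finset.mem_univ i, ?_⟩
  exact mul_self_pos.mpr hi

lemma dot3_smul_left' (c : ℝ) (a b : V3) : dot3 (c • a) b = c * dot3 a b := by
  simp only [dot3, Pi.smul_apply, smul_eq_mul, Finset.mul_sum]
  exact Finset.sum_congr rfl fun i _ => by ring

lemma dot3_smul_right' (c : ℝ) (a b : V3) : dot3 a (c • b) = c * dot3 a b := by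
  simp only [dot3, Pi.smul_apply, smul_eq_mul, Finset.mul_sum]
  exact Finset.sum_congr rfl fun i _ => by ring

lemma dot3_sum_left' {n : ℕ} (f : Fin n → V3) (b : V3) :
    dot3 (∑ k, f k) b = ∑ k, dot3 (f k) b := by
  simp [dot3, Finset.sum_apply, Finset.sum_mul]
  rw [Finset.sum_comm]

lemma det_rows_eq' (a b c : V3) :
    Matrix.det (Matrix.of ![a, b, c]) = dot3 c (crossProduct a b) := by
  simp [Matrix.det_fin_three, dot3, cross_apply, Fin.sum_univ_three]; ring

lemma clm_apply_sum' (L : V3 →L[ℝ] ℝ) (v : V3) :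
    L v = ∑ b, v b * L (Pi.single b 1) := by
  conv_lhs => rw [← Finset.univ_sum_single v]
  rw [map_sum]
  refine Finset.sum_congr rfl fun b _ => ?_
  have h : Pi.single b (v b) = v b • (Pi.single b 1 : V3) := by
    ext j; by_cases h : j = b <;> simp [Pi.single_apply, h]
  rw [h, map_smul, smul_eq_mul]

lemma sum_shuffle' (g gc : Fin 2 → Fin 3 → ℝ) (J : Fin 3 → Fin 3 → ℝ) :
    ∑ α, ∑ j, (∑ b, g α b * J j b) * gc α j
      = ∑ b, ∑ j, (∑ α, g α b * gc α j) * J j b := by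
  simp only [Fin.sum_univ_two, Fin.sum_univ_three]; ring

/-- The curvilinear surface divergence of an operator-valued field equals the
row-wise Cartesian surface divergence of its transpose
(Theorem `theorem_comparison_local_cartesian`, fourth identity). -/
theorem stmt6
    (U : Set V2) (hU : IsOpen U)
    (R : V2 → V3) (hR : ContDiffOn ℝ (⊤ : ℕ∞) R U)
    (hImm : ∀ ξ ∈ U, LinearIndependent ℝ ![gcov R 0 ξ, gcov R 1 ξ])
    (T : V2 → Matrix (Fin 3) (Fin 3) ℝ)
    (hT : ∀ i j, ContDiffOn ℝ 1 (fun ξ => T ξ i j) U)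
    (W : Set V3) (hW : IsOpen W) (hRW : ∀ ξ ∈ U, R ξ ∈ W)
    (Te : V3 → Matrix (Fin 3) (Fin 3) ℝ)
    (hTe : ∀ i j, ContDiffOn ℝ 1 (fun y => Te y i j) W)
    (hext : ∀ ξ ∈ U, Te (R ξ) = T ξ)
    (ξ : V2) (hξ : ξ ∈ U) :
    divGammaMat R T ξ =
      ∑ i, Matrix.trace
          (Pmat R ξ * jac3 (fun y => (Te y).mulVec (Pi.single i 1)) (R ξ) * Pmat R ξ)
        • (Pi.single i 1 : V3) := by
  classical
  -- notation
  set w : V3 := crossProduct (gcov R 0 ξ) (gcov R 1 ξ) with hwdef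
  have hw : w ≠ 0 := crossProduct_ne_zero_iff_linearIndependent.mpr (hImm ξ hξ)
  have hww : 0 < dot3 w w := dot3_self_pos' hw
  have hsq : Real.sqrt (dot3 w w) * Real.sqrt (dot3 w w) = dot3 w w :=
    Real.mul_self_sqrt hww.le
  have hnormpos : 0 < norm3 w := Real.sqrt_pos.mpr hww
  have hnw : nrm R ξ = (norm3 w)⁻¹ • w := rfl
  have hnn : dot3 (nrm R ξ) (nrm R ξ) = 1 := by
    rw [hnw, dot3_smul_left', dot3_smul_right']
    show (norm3 w)⁻¹ * ((norm3 w)⁻¹ * dot3 w w) = 1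
    rw [norm3] at hnormpos ⊢
    field_simp
    rw [Real.sq_sqrt hww.le]
  have hng0 : dot3 (nrm R ξ) (gcov R 0 ξ) = 0 := by
    rw [hnw, dot3_smul_left', hwdef, dot3_cross_left', mul_zero]
  have hng1 : dot3 (nrm R ξ) (gcov R 1 ξ) = 0 := by
    rw [hnw, dot3_smul_left', hwdef, dot3_cross_right', mul_zero]
  have hng : ∀ β : Fin 2, dot3 (nrm R ξ) (gcov R β ξ) = 0 := by
    intro β; fin_cases β; exacts [hng0, hng1]
  -- metric
  have hdet : (gmat R ξ).det = dot3 w w := by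
    rw [Matrix.det_fin_two, hwdef, dot3_cross_self']
    simp only [gmat, Matrix.of_apply]
    rw [dot3_comm' (gcov R 1 ξ) (gcov R 0 ξ)]
  have hdet0 : (gmat R ξ).det ≠ 0 := by rw [hdet]; exact hww.ne'
  have hGinv : ginv R ξ * gmat R ξ = 1 := Matrix.nonsing_inv_mul _ (isUnit_iff_ne_zero.mpr hdet0)
  have hdual : ∀ α β : Fin 2, dot3 (gcon R α ξ) (gcov R β ξ) = if α = β then 1 else 0 := by
    intro α β
    rw [gcon, dot3_sum_left']
    simp_rw [dot3_smul_left']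
    have h2 : ∑ γ, ginv R ξ α γ * dot3 (gcov R γ ξ) (gcov R β ξ)
        = (ginv R ξ * gmat R ξ) α β := by
      rw [Matrix.mul_apply]; rfl
    rw [h2, hGinv, Matrix.one_apply]
  have hgcn : ∀ α : Fin 2, dot3 (gcon R α ξ) (nrm R ξ) = 0 := by
    intro α
    rw [gcon, dot3_sum_left']
    simp_rw [dot3_smul_left']
    refine Finset.sum_eq_zero fun γ _ => ?_
    rw [dot3_comm', hng γ, mul_zero]
  -- the matrix M = ∑_α g_α ⊗ g^α + n ⊗ n equals the identity
  set S : Matrix (Fin 3) (Fin 3) ℝ := (Matrix.of ![gcov R 0 ξ, gcov R 1 ξ, nrm R ξ])ᵀ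
    with hSdef
  have hdetS : S.det ≠ 0 := by
    rw [hSdef, Matrix.det_transpose, det_rows_eq', ← hwdef, hnw, dot3_smul_left']
    exact (mul_pos (inv_pos.mpr hnormpos) hww).ne'
  set M : Matrix (Fin 3) (Fin 3) ℝ :=
    Matrix.of fun b j => (∑ α, gcov R α ξ b * gcon R α ξ j) + nrm R ξ b * nrm R ξ j
    with hMdef
  have hMS : M * S = S := by
    have d00 := hdual 0 0; have d01 := hdual 0 1
    have d10 := hdual 1 0; have d11 := hdual 1 1
    have c0 := hgcn 0; have c1 := hgcn 1
    have e0 := hng 0; have e1 := hng 1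
    have f1 := hnn
    rw [if_pos rfl] at d00
    rw [if_pos rfl] at d11
    rw [if_neg (by decide)] at d01
    rw [if_neg (by decide)] at d10
    simp only [dot3, Fin.sum_univ_three] at d00 d01 d10 d11 c0 c1 e0 e1 f1
    ext b k
    fin_cases k
    · show ∑ j, M b j * gcov R 0 ξ j = gcov R 0 ξ b
      simp only [hMdef, Matrix.of_apply, Fin.sum_univ_two, Fin.sum_univ_three]
      linear_combination gcov R 0 ξ b * d00 + gcov R 1 ξ b * d10 + nrm R ξ b * e0
    · show ∑ j, M b j * gcov R 1 ξ j = gcov R 1 ξ b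
      simp only [hMdef, Matrix.of_apply, Fin.sum_univ_two, Fin.sum_univ_three]
      linear_combination gcov R 0 ξ b * d01 + gcov R 1 ξ b * d11 + nrm R ξ b * e1
    · show ∑ j, M b j * nrm R ξ j = nrm R ξ b
      simp only [hMdef, Matrix.of_apply, Fin.sum_univ_two, Fin.sum_univ_three]
      linear_combination gcov R 0 ξ b * c0 + gcov R 1 ξ b * c1 + nrm R ξ b * f1
  have hSS := Matrix.mul_nonsing_inv S (isUnit_iff_ne_zero.mpr hdetS)
  have hM1 : M = 1 := by
    calc M = M * (S * S⁻¹) := by rw [hSS, mul_one]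
      _ = (M * S) * S⁻¹ := by rw [Matrix.mul_assoc]
      _ = S * S⁻¹ := by rw [hMS]
      _ = 1 := hSS
  have key : ∀ b j : Fin 3, (∑ α, gcov R α ξ b * gcon R α ξ j) = Pmat R ξ b j := by
    intro b j
    have h := congrFun (congrFun (congrArg (fun A => A) hM1) b) j
    simp only [hMdef, Matrix.of_apply] at h
    have h1 : (1 : Matrix (Fin 3) (Fin 3) ℝ) b j = if b = j then 1 else 0 := Matrix.one_apply
    rw [h1] at h
    simp only [Pmat, Matrix.sub_apply, Matrix.one_apply, Matrix.of_apply]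
    linarith [h]
  -- projection is idempotent
  set N : Matrix (Fin 3) (Fin 3) ℝ := Matrix.of fun i j => nrm R ξ i * nrm R ξ j with hNdef
  have hPN : Pmat R ξ = 1 - N := rfl
  have hNN : N * N = N := by
    ext b j
    rw [Matrix.mul_apply]
    have : ∀ a : Fin 3, N b a * N a j = (nrm R ξ a * nrm R ξ a) * (nrm R ξ b * nrm R ξ j) := by
      intro a; simp only [hNdef, Matrix.of_apply]; ring
    rw [Finset.sum_congr rfl fun a _ => this a, ← Finset.sum_mul]
    rw [show (∑ a, nrm R ξ a * nrm R ξ a) = dot3 (nrm R ξ) (nrm R ξ) from rfl, hnn, one_mul]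
    rfl
  have hPP : Pmat R ξ * Pmat R ξ = Pmat R ξ := by
    rw [hPN, sub_mul, one_mul, mul_sub, mul_one, hNN, sub_self, sub_zero]
  -- analysis: chain rule
  have hchain : ∀ (m a : Fin 3) (α : Fin 2),
      pd2 (fun ξ' => T ξ' a m) α ξ
        = ∑ b, gcov R α ξ b * pd3 (fun y => Te y a m) b (R ξ) := by
    intro m a α
    have hfd : DifferentiableAt ℝ (fun y => Te y a m) (R ξ) :=
      ((hTe a m).differentiableOn one_ne_zero).differentiableAt (hW.mem_nhds (hRW ξ hξ))
    have hRd : DifferentiableAt ℝ R ξ :=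
      (hR.differentiableOn (by simp)).differentiableAt (hU.mem_nhds hξ)
    have heq : (fun ξ' => T ξ' a m) =ᶠ[nhds ξ] (fun ξ' => Te (R ξ') a m) := by
      filter_upwards [hU.mem_nhds hξ] with x hx
      rw [hext x hx]
    have hcomp : fderiv ℝ (fun ξ' => Te (R ξ') a m) ξ
        = (fderiv ℝ (fun y => Te y a m) (R ξ)).comp (fderiv ℝ R ξ) :=
      fderiv_comp' ξ hfd hRd
    show fderiv ℝ (fun ξ' => T ξ' a m) ξ (Pi.single α 1) = _
    rw [heq.fderiv_eq, hcomp, ContinuousLinearMap.comp_apply,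
      clm_apply_sum' (fderiv ℝ (fun y => Te y a m) (R ξ)) (fderiv ℝ R ξ (Pi.single α 1))]
    rfl
  -- the Jacobian matrix
  have hjac : ∀ m : Fin 3, jac3 (fun y => (Te y).mulVec (Pi.single m 1)) (R ξ)
      = Matrix.of fun a b => pd3 (fun y => Te y a m) b (R ξ) := by
    intro m
    have hu : (fun y => (Te y).mulVec (Pi.single m 1)) = fun y a => Te y a m * 1 := by
      funext y; ext a; simp [Matrix.mulVec, dotProduct, Pi.single_apply]
    have hdiff : ∀ a : Fin 3, DifferentiableAt ℝ (fun y => Te y a m * 1) (R ξ) := by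
      intro a
      exact (((hTe a m).differentiableOn one_ne_zero).differentiableAt
        (hW.mem_nhds (hRW ξ hξ))).mul_const 1
    ext a b
    show fderiv ℝ (fun y => (Te y).mulVec (Pi.single m 1)) (R ξ) (Pi.single b 1) a = _
    rw [hu, fderiv_pi hdiff]
    simp only [ContinuousLinearMap.pi_apply, Matrix.of_apply]
    show fderiv ℝ (fun y => Te y a m * 1) (R ξ) (Pi.single b 1) = pd3 (fun y => Te y a m) b (R ξ)
    simp only [mul_one]
    rfl
  -- assemble
  funext k
  have hrhs : (∑ i, Matrix.trace
        (Pmat R ξ * jac3 (fun y => (Te y).mulVec (Pi.single i 1)) (R ξ) * Pmat R ξ)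
      • (Pi.single i 1 : V3)) k
      = Matrix.trace (Pmat R ξ * jac3 (fun y => (Te y).mulVec (Pi.single k 1)) (R ξ) * Pmat R ξ) := by
    rw [Finset.sum_apply]
    simp [Pi.single_apply]
  rw [hrhs, hjac k]
  set J : Matrix (Fin 3) (Fin 3) ℝ := Matrix.of fun a b => pd3 (fun y => Te y a k) b (R ξ)
    with hJdef
  have htr : Matrix.trace (Pmat R ξ * J * Pmat R ξ) = Matrix.trace (Pmat R ξ * J) := by
    rw [Matrix.trace_mul_comm, ← Matrix.mul_assoc, hPP]
  rw [htr]
  -- left-hand side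
  have hlhs : divGammaMat R T ξ k
      = ∑ α, ∑ j, (∑ b, gcov R α ξ b * J j b) * gcon R α ξ j := by
    rw [divGammaMat, Finset.sum_apply]
    refine Finset.sum_congr rfl fun α _ => ?_
    rw [Matrix.mulVec, dotProduct]
    refine Finset.sum_congr rfl fun j _ => ?_
    rw [Matrix.transpose_apply]
    show pdMat T α ξ j k * gcon R α ξ j = _
    rw [show pdMat T α ξ j k = pd2 (fun ξ' => T ξ' j k) α ξ from rfl, hchain k j α]
    rfl
  rw [hlhs, sum_shuffle' (J := J)]
  -- right-hand side trace
  rw [Matrix.trace]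
  simp only [Matrix.diag_apply, Matrix.mul_apply]
  refine Finset.sum_congr rfl fun b _ => ?_
  refine Finset.sum_congr rfl fun j _ => ?_
  rw [key b j]
end
end

section
/- Assume the parametrization moves in the purely normal direction: ∂R/∂t(ξ,t) = v_N(ξ,t) n(ξ,t) for a scalar function v_N on U × I. Let w : U × I → ℝ³ be a smooth field that is tangential at every point (P w = w), set v := w + v_N n, and let w^e be a C¹ function on an open neighborhood of {(R(ξ,t),t) : (ξ,t) ∈ U × I} in ℝ³ × ℝ with w^e(R(ξ,t),t) = w(ξ,t). Then at every (ξ,t) ∈ U × I: P (d/dt)[w^e(R(ξ,t),t)] + (∇_Γ w) w = P ( ∂_t w^e + (∇̂_y w^e) v ), where ∇_Γ w := (P ∂_α w) ⊗ g^α is the covariant derivative at fixed t, ∇̂_y denotes the spatial Jacobian, and all spatial derivatives are evaluated at (R(ξ,t),t). -/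
noncomputable section

open scoped BigOperators Matrix

open Matrix

lemma outer_mulVec (a b v : V3) : (outer a b).mulVec v = (b ⬝ᵥ v) • a := by
  funext i
  simp [outer, Matrix.mulVec, dotProduct, Finset.mul_sum, mul_assoc, mul_comm, mul_left_comm]

lemma dotProduct_sumFin (v : V3) (f : Fin 2 → V3) :
    v ⬝ᵥ (∑ α, f α) = ∑ α, v ⬝ᵥ f α := by
  rw [Fin.sum_univ_two, Fin.sum_univ_two, dotProduct_add]

lemma Pmat_eq (R : V2 → V3) (ξ : V2) : Pmat R ξ = 1 - outer (nrm R ξ) (nrm R ξ) := rfl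

lemma Pmat_mulVec (R : V2 → V3) (ξ : V2) (v : V3) :
    (Pmat R ξ).mulVec v = v - (nrm R ξ ⬝ᵥ v) • nrm R ξ := by
  rw [Pmat_eq, Matrix.sub_mulVec, Matrix.one_mulVec, outer_mulVec]

section Core
variable (R : V2 → V3) (ξ : V2)
  (hli : LinearIndependent ℝ ![gcov R 0 ξ, gcov R 1 ξ])

lemma cross_ne (hli : LinearIndependent ℝ ![gcov R 0 ξ, gcov R 1 ξ]) :
    crossProduct (gcov R 0 ξ) (gcov R 1 ξ) ≠ 0 :=
  crossProduct_ne_zero_iff_linearIndependent.mpr hli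

lemma cc_pos (hli : LinearIndependent ℝ ![gcov R 0 ξ, gcov R 1 ξ]) :
    (0:ℝ) < crossProduct (gcov R 0 ξ) (gcov R 1 ξ) ⬝ᵥ crossProduct (gcov R 0 ξ) (gcov R 1 ξ) := by
  set c := crossProduct (gcov R 0 ξ) (gcov R 1 ξ)
  have h : c ⬝ᵥ c ≠ 0 := (dotProduct_self_eq_zero).not.mpr (cross_ne R ξ hli)
  have h2 : 0 ≤ c ⬝ᵥ c := Finset.sum_nonneg fun i _ => mul_self_nonneg _
  exact h2.lt_of_ne (Ne.symm h)

lemma nrm_dot_nrm (hli : LinearIndependent ℝ ![gcov R 0 ξ, gcov R 1 ξ]) :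
    nrm R ξ ⬝ᵥ nrm R ξ = 1 := by
  set c := crossProduct (gcov R 0 ξ) (gcov R 1 ξ) with hc
  have hpos := cc_pos R ξ hli
  have hn : nrm R ξ = (norm3 c)⁻¹ • c := rfl
  have hsq : norm3 c * norm3 c = c ⬝ᵥ c := Real.mul_self_sqrt hpos.le
  have hne : norm3 c ≠ 0 := (Real.sqrt_pos.mpr hpos).ne'
  rw [hn, smul_dotProduct, dotProduct_smul, smul_eq_mul, smul_eq_mul]
  field_simp
  rw [sq, hsq]

lemma nrm_dot_gcov (α : Fin 2) : nrm R ξ ⬝ᵥ gcov R α ξ = 0 := by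
  set c := crossProduct (gcov R 0 ξ) (gcov R 1 ξ) with hc
  have hn : nrm R ξ = (norm3 c)⁻¹ • c := rfl
  have hcg : c ⬝ᵥ gcov R α ξ = 0 := by
    fin_cases α
    · rw [dotProduct_comm]; exact dot_self_cross _ _
    · rw [dotProduct_comm]; exact dot_cross_self _ _
  rw [hn, smul_dotProduct, hcg, smul_zero]

lemma gmat_det_ne (hli : LinearIndependent ℝ ![gcov R 0 ξ, gcov R 1 ξ]) :
    (gmat R ξ).det ≠ 0 := by
  set c := crossProduct (gcov R 0 ξ) (gcov R 1 ξ) with hc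
  have hdet : (gmat R ξ).det = c ⬝ᵥ c := by
    rw [Matrix.det_fin_two]
    have h := cross_dot_cross (gcov R 0 ξ) (gcov R 1 ξ) (gcov R 0 ξ) (gcov R 1 ξ)
    rw [hc, h]
    simp only [gmat, gcov, Matrix.of_apply, dot3, dotProduct]
    try ring
  rw [hdet]; exact (cc_pos R ξ hli).ne'

lemma tangent_decomp (hli : LinearIndependent ℝ ![gcov R 0 ξ, gcov R 1 ξ])
    (u : V3) (hu : (Pmat R ξ).mulVec u = u) :
    u = ∑ α, dot3 (gcon R α ξ) u • gcov R α ξ := by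
  have hdetne := gmat_det_ne R ξ hli
  have hinv2 : gmat R ξ * ginv R ξ = 1 :=
    Matrix.mul_nonsing_inv _ (isUnit_iff_ne_zero.mpr hdetne)
  -- normal is orthogonal to u
  have hnu : nrm R ξ ⬝ᵥ u = 0 := by
    have h := Pmat_mulVec R ξ u
    rw [hu] at h
    have h2 : (nrm R ξ ⬝ᵥ u) • nrm R ξ = 0 := by
      have := sub_eq_self.mp h.symm
      exact this
    rcases smul_eq_zero.mp h2 with h3 | h3
    · exact h3
    · exfalso
      have := nrm_dot_nrm R ξ hli
      rw [h3] at this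
      simp at this
  set c := crossProduct (gcov R 0 ξ) (gcov R 1 ξ) with hc
  have hcu : c ⬝ᵥ u = 0 := by
    have hn : nrm R ξ = (norm3 c)⁻¹ • c := rfl
    rw [hn, smul_dotProduct, smul_eq_mul] at hnu
    have hne : (norm3 c : ℝ)⁻¹ ≠ 0 := inv_ne_zero (Real.sqrt_pos.mpr (cc_pos R ξ hli)).ne'
    exact (mul_eq_zero.mp hnu).resolve_left hne
  set z := u - ∑ α, dot3 (gcon R α ξ) u • gcov R α ξ with hz
  have hdual : ∀ β : Fin 2, gcov R β ξ ⬝ᵥ z = 0 := by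
    intro β
    rw [hz, dotProduct_sub]
    have key : gcov R β ξ ⬝ᵥ (∑ α, dot3 (gcon R α ξ) u • gcov R α ξ) = gcov R β ξ ⬝ᵥ u := by
      rw [dotProduct_sumFin]
      have h1 : ∀ α : Fin 2, gcov R β ξ ⬝ᵥ (dot3 (gcon R α ξ) u • gcov R α ξ)
          = ∑ γ, gmat R ξ β α * ginv R ξ α γ * (gcov R γ ξ ⬝ᵥ u) := by
        intro α
        rw [dotProduct_smul, smul_eq_mul]
        have hd : dot3 (gcon R α ξ) u = ∑ γ, ginv R ξ α γ * (gcov R γ ξ ⬝ᵥ u) := by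
          simp only [gcon, dot3, dotProduct, Finset.sum_apply, Pi.smul_apply,
            smul_eq_mul, Finset.sum_mul, Finset.mul_sum]
          rw [Finset.sum_comm]
          exact Finset.sum_congr rfl fun γ _ => Finset.sum_congr rfl fun i _ => by ring
        have hg : gcov R β ξ ⬝ᵥ gcov R α ξ = gmat R ξ β α := rfl
        rw [hd, hg, Finset.sum_mul]
        exact Finset.sum_congr rfl fun γ _ => by ring
      rw [Finset.sum_congr rfl fun α _ => h1 α, Finset.sum_comm]
      have h2 : ∀ γ : Fin 2, ∑ α, gmat R ξ β α * ginv R ξ α γ * (gcov R γ ξ ⬝ᵥ u)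
          = (gmat R ξ * ginv R ξ) β γ * (gcov R γ ξ ⬝ᵥ u) := by
        intro γ
        rw [Matrix.mul_apply, Finset.sum_mul]
      rw [Finset.sum_congr rfl fun γ _ => h2 γ, hinv2]
      simp [Matrix.one_apply]
    rw [key, sub_self]
  have hcz : c ⬝ᵥ z = 0 := by
    rw [hz, dotProduct_sub, hcu, dotProduct_sumFin]
    have : ∀ α : Fin 2, c ⬝ᵥ (dot3 (gcon R α ξ) u • gcov R α ξ) = 0 := by
      intro α
      rw [dotProduct_smul]
      have hcg : c ⬝ᵥ gcov R α ξ = 0 := by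
        fin_cases α
        · rw [dotProduct_comm]; exact dot_self_cross _ _
        · rw [dotProduct_comm]; exact dot_cross_self _ _
      rw [hcg, smul_zero]
    rw [Finset.sum_congr rfl fun α _ => this α]
    simp
  set M : Matrix (Fin 3) (Fin 3) ℝ := ![c, gcov R 0 ξ, gcov R 1 ξ] with hM
  have hMdet : M.det ≠ 0 := by
    have h : M.det = c ⬝ᵥ (crossProduct (gcov R 0 ξ) (gcov R 1 ξ)) :=
      (triple_product_eq_det c _ _).symm
    rw [h, ← hc]
    exact (cc_pos R ξ hli).ne'
  have hMz : M.mulVec z = 0 := by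
    funext i
    fin_cases i
    · exact hcz
    · exact hdual 0
    · exact hdual 1
  have hz0 : z = 0 := by
    have h := congrArg (fun v => (M⁻¹).mulVec v) hMz
    simpa [Matrix.mulVec_mulVec, Matrix.nonsing_inv_mul _ (isUnit_iff_ne_zero.mpr hMdet)] using h
  have := sub_eq_zero.mp hz0
  exact this

end Core

lemma clm_apply_fst (L : (V3 × ℝ) →L[ℝ] V3) (a : V3) :
    L (a, 0) = ∑ j, a j • L (Pi.single j 1, (0:ℝ)) := by
  have ha : ((a, (0:ℝ)) : V3 × ℝ) = ∑ j, a j • (((Pi.single j 1 : V3), (0:ℝ)) : V3 × ℝ) := by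
    rw [Prod.ext_iff]
    constructor
    · rw [Prod.fst_sum]
      funext i
      simp [Finset.sum_apply, Pi.single_apply]
    · rw [Prod.snd_sum]
      simp
  rw [ha, map_sum]
  simp only [_root_.map_smul]

lemma jac_mulVec (L : (V3 × ℝ) →L[ℝ] V3) (a : V3) :
    (Matrix.of fun i j => L (Pi.single j 1, (0:ℝ)) i).mulVec a = L (a, 0) := by
  rw [clm_apply_fst]
  funext i
  simp [Matrix.mulVec, dotProduct, Finset.sum_apply, mul_comm]

/-- For a normal-direction parametrization and a tangential field `w`, the projected
material derivative along `v = w + v_N n` has the stated Cartesian representation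
(comparison of the material derivatives in Section 5). -/
theorem stmt17
    (U : Set V2) (hU : IsOpen U)
    (I : Set ℝ) (hI : IsOpen I) (hIc : I.OrdConnected)
    (R : V2 → ℝ → V3)
    (hR : ContDiffOn ℝ (⊤ : ℕ∞) (fun p : V2 × ℝ => R p.1 p.2) (U ×ˢ I))
    (hImm : ∀ t ∈ I, ∀ ξ ∈ U,
      LinearIndependent ℝ ![gcov (fun z => R z t) 0 ξ, gcov (fun z => R z t) 1 ξ])
    (vN : V2 → ℝ → ℝ)
    (hnormal : ∀ ξ ∈ U, ∀ t ∈ I, deriv (R ξ) t = vN ξ t • nrm (fun z => R z t) ξ)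
    (w : V2 → ℝ → V3)
    (hw : ContDiffOn ℝ (⊤ : ℕ∞) (fun p : V2 × ℝ => w p.1 p.2) (U ×ˢ I))
    (htan : ∀ ξ ∈ U, ∀ t ∈ I, (Pmat (fun z => R z t) ξ).mulVec (w ξ t) = w ξ t)
    (W : Set (V3 × ℝ)) (hW : IsOpen W)
    (hRW : ∀ ξ ∈ U, ∀ t ∈ I, (R ξ t, t) ∈ W)
    (we : V3 × ℝ → V3) (hwe : ContDiffOn ℝ 1 we W)
    (hext : ∀ ξ ∈ U, ∀ t ∈ I, we (R ξ t, t) = w ξ t)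
    (ξ : V2) (hξ : ξ ∈ U) (t : ℝ) (ht : t ∈ I) :
    (Pmat (fun z => R z t) ξ).mulVec (deriv (fun s => we (R ξ s, s)) t)
      + (covDer (fun z => R z t) (fun ξ' => w ξ' t) ξ).mulVec (w ξ t)
    = (Pmat (fun z => R z t) ξ).mulVec
        (fderiv ℝ we (R ξ t, t) (0, 1)
          + (Matrix.of fun i j => fderiv ℝ we (R ξ t, t) (Pi.single j 1, 0) i).mulVec
              (w ξ t + vN ξ t • nrm (fun z => R z t) ξ)) := by
  have hmemW := hRW ξ hξ t ht
  set Rt : V2 → V3 := fun z => R z t with hRt_def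
  set L := fderiv ℝ we (R ξ t, t) with hL
  -- differentiability of R at (ξ,t)
  have hRdiff : DifferentiableAt ℝ (fun p : V2 × ℝ => R p.1 p.2) (ξ, t) :=
    ((hR (ξ, t) ⟨hξ, ht⟩).contDiffAt ((hU.prod hI).mem_nhds ⟨hξ, ht⟩)).differentiableAt (by simp)
  set F := fderiv ℝ (fun p : V2 × ℝ => R p.1 p.2) (ξ, t) with hF
  have hF' : HasFDerivAt (fun p : V2 × ℝ => R p.1 p.2) F (ξ, t) := hRdiff.hasFDerivAt
  -- spatial derivative of Rt
  have hmk : HasFDerivAt (fun z : V2 => ((z, t) : V2 × ℝ))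
      (ContinuousLinearMap.inl ℝ V2 ℝ) ξ := hasFDerivAt_prodMk_left ξ t
  have hRxi : HasFDerivAt Rt (F.comp (ContinuousLinearMap.inl ℝ V2 ℝ)) ξ := by have := hF'.comp ξ hmk; exact this
  have hgcov : ∀ α : Fin 2, gcov Rt α ξ = F ((Pi.single α 1 : V2), (0:ℝ)) := by
    intro α
    show fderiv ℝ Rt ξ (Pi.single α 1) = _
    rw [hRxi.fderiv]
    rfl
  -- time derivative of R ξ
  have hcurve0 : HasDerivAt (fun s : ℝ => ((ξ, s) : V2 × ℝ)) (((0 : V2), (1:ℝ)) : V2 × ℝ) t :=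
    (hasDerivAt_const t ξ).prodMk (hasDerivAt_id t)
  have hRt' : HasDerivAt (fun s => R ξ s) (F ((0:V2), (1:ℝ))) t :=
    hF'.comp_hasDerivAt t hcurve0
  have hF01 : F ((0:V2), (1:ℝ)) = vN ξ t • nrm Rt ξ := by
    rw [← hRt'.deriv]
    exact hnormal ξ hξ t ht
  -- we differentiable at p0
  have hweD : DifferentiableAt ℝ we (R ξ t, t) :=
    ((hwe _ hmemW).contDiffAt (hW.mem_nhds hmemW)).differentiableAt (by simp)
  -- time derivative of we along the curve
  have hcurve : HasDerivAt (fun s : ℝ => ((R ξ s, s) : V3 × ℝ)) ((F ((0:V2),(1:ℝ)), 1) : V3 × ℝ) t :=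
    hRt'.prodMk (hasDerivAt_id t)
  have hcomp : HasDerivAt (fun s => we (R ξ s, s)) (L ((F ((0:V2),(1:ℝ)), 1) : V3 × ℝ)) t :=
    hweD.hasFDerivAt.comp_hasDerivAt_of_eq t hcurve rfl
  have hderiv : deriv (fun s => we (R ξ s, s)) t = L (vN ξ t • nrm Rt ξ, 1) := by
    rw [hcomp.deriv, hF01]
  -- spatial partials of w in terms of L
  have hpd : ∀ α : Fin 2, pd2 (fun ξ' => w ξ' t) α ξ = L (gcov Rt α ξ, 0) := by
    intro α
    have heq : (fun ξ' => w ξ' t) =ᶠ[nhds ξ] (fun ξ' => we (R ξ' t, t)) := by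
      filter_upwards [hU.mem_nhds hξ] with ξ' hξ' using (hext ξ' hξ' t ht).symm
    have hmk2 : HasFDerivAt (fun ξ' : V2 => ((R ξ' t, t) : V3 × ℝ))
        ((F.comp (ContinuousLinearMap.inl ℝ V2 ℝ)).prod 0) ξ :=
      hRxi.prodMk (hasFDerivAt_const t ξ)
    have hφ : HasFDerivAt (fun ξ' => we (R ξ' t, t))
        (L.comp ((F.comp (ContinuousLinearMap.inl ℝ V2 ℝ)).prod 0)) ξ :=
      hweD.hasFDerivAt.comp ξ hmk2
    show fderiv ℝ (fun ξ' => w ξ' t) ξ (Pi.single α 1) = _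
    rw [heq.fderiv_eq, hφ.fderiv, hgcov]
    rfl
  set nv := nrm Rt ξ with hnv
  set wv := w ξ t with hwv
  set P := Pmat Rt ξ with hP
  have hdec : wv = ∑ α, dot3 (gcon Rt α ξ) wv • gcov Rt α ξ :=
    tangent_decomp Rt ξ (hImm t ht ξ hξ) wv (htan ξ hξ t ht)
  have hcov : (covDer Rt (fun ξ' => w ξ' t) ξ).mulVec wv
      = dot3 (gcon Rt 0 ξ) wv • P.mulVec (L (gcov Rt 0 ξ, 0))
        + dot3 (gcon Rt 1 ξ) wv • P.mulVec (L (gcov Rt 1 ξ, 0)) := by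
    rw [covDer, Fin.sum_univ_two, Matrix.add_mulVec, outer_mulVec, outer_mulVec, hpd 0, hpd 1]
    rfl
  have h1 : L (vN ξ t • nv, 1) = L (0, 1) + vN ξ t • L (nv, 0) := by
    rw [show ((vN ξ t • nv, (1:ℝ)) : V3 × ℝ)
        = ((0:V3), (1:ℝ)) + vN ξ t • ((nv, (0:ℝ)) : V3 × ℝ) by
      rw [Prod.smul_mk, smul_zero, Prod.mk_add_mk, zero_add, add_zero]]
    rw [map_add, _root_.map_smul]
  have h2 : L (wv + vN ξ t • nv, 0) = L (wv, 0) + vN ξ t • L (nv, 0) := by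
    rw [show ((wv + vN ξ t • nv, (0:ℝ)) : V3 × ℝ)
        = ((wv, (0:ℝ)) : V3 × ℝ) + vN ξ t • ((nv, (0:ℝ)) : V3 × ℝ) by
      rw [Prod.smul_mk, smul_zero, Prod.mk_add_mk, add_zero]]
    rw [map_add, _root_.map_smul]
  have h3 : L (wv, 0) = dot3 (gcon Rt 0 ξ) wv • L (gcov Rt 0 ξ, 0)
      + dot3 (gcon Rt 1 ξ) wv • L (gcov Rt 1 ξ, 0) := by
    conv_lhs => rw [hdec, Fin.sum_univ_two]
    rw [show ((dot3 (gcon Rt 0 ξ) wv • gcov Rt 0 ξ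
            + dot3 (gcon Rt 1 ξ) wv • gcov Rt 1 ξ, (0:ℝ)) : V3 × ℝ)
        = dot3 (gcon Rt 0 ξ) wv • ((gcov Rt 0 ξ, (0:ℝ)) : V3 × ℝ)
          + dot3 (gcon Rt 1 ξ) wv • ((gcov Rt 1 ξ, (0:ℝ)) : V3 × ℝ) by
      rw [Prod.smul_mk, Prod.smul_mk, Prod.mk_add_mk, smul_zero, smul_zero, add_zero]]
    rw [map_add, _root_.map_smul, _root_.map_smul]
  rw [hderiv, jac_mulVec, hcov, h1, h2, h3]
  simp only [Matrix.mulVec_add, Matrix.mulVec_smul]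
  abel
end
end
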